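/- Let L : H → G be bounded linear, bounded below, with ‖L‖ ≤ 1, let γ > 0, and let A, B be strictly positive on G. Then d_H(L ⊡_γ A, L ⊡_γ B) ≤ d_G(A, B), where d denotes the Thompson metric d(X,Y) = ln max{g(X,Y), g(Y,X)} with g(X,Y) = inf{λ > 0 : X ≼ λY}, and L ⊡_γ B = L* ∘ (B⁻¹ + γ(Id_G − L L*))⁻¹ ∘ L. That is, the resolvent cocomposition is nonexpansive for the Thompson metric. -/

import Mathlib

open ContinuousLinearMap MeasureTheory

noncomputable section

variable {E : Type*} [NormedAddCommGroup E] [InnerProductSpace ℝ E] [CompleteSpace E]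
variable {H G : Type*} [NormedAddCommGroup H] [InnerProductSpace ℝ H] [CompleteSpace H]
  [NormedAddCommGroup G] [InnerProductSpace ℝ G] [CompleteSpace G]

/-- Löwner partial order: `A ≼ B` iff `B - A` is a positive operator. -/
def Loewner (A B : E →L[ℝ] E) : Prop := (B - A).IsPositive

/-- Strictly positive operators: `α • Id ≼ A` for some `α > 0`. -/
def StrictlyPos (A : E →L[ℝ] E) : Prop :=
  IsSelfAdjoint A ∧ ∃ α : ℝ, 0 < α ∧ Loewner (α • (1 : E →L[ℝ] E)) A

/-- Bounded below linear operator. -/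
def BoundedBelow (L : H →L[ℝ] G) : Prop := ∃ β : ℝ, 0 < β ∧ ∀ x : H, β * ‖x‖ ≤ ‖L x‖

/-- Resolvent cocomposition `L ⊡_γ B = L* ∘ (B⁻¹ + γ(Id − L L*))⁻¹ ∘ L`. -/
def rcc (L : H →L[ℝ] G) (γ : ℝ) (B : G →L[ℝ] G) : H →L[ℝ] H :=
  (adjoint L) ∘L (Ring.inverse (Ring.inverse B + γ • ((1 : G →L[ℝ] G) - L ∘L adjoint L))) ∘L L

/-- Resolvent composition `L ⊙_γ B = (L ⊡_{1/γ} B⁻¹)⁻¹`. -/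
def rc (L : H →L[ℝ] G) (γ : ℝ) (B : G →L[ℝ] G) : H →L[ℝ] H :=
  Ring.inverse (rcc L (1/γ) (Ring.inverse B))

/-- Parallel composition `L* ▸ B = (L* ∘ B⁻¹ ∘ L)⁻¹`. -/
def parallelComp (L : H →L[ℝ] G) (B : G →L[ℝ] G) : H →L[ℝ] H :=
  Ring.inverse ((adjoint L) ∘L (Ring.inverse B) ∘L L)

/-- `g(A,B) = inf {λ > 0 : A ≼ λ B}`. -/
def gThomp (A B : E →L[ℝ] E) : ℝ := sInf {l : ℝ | 0 < l ∧ Loewner A (l • B)}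

/-- Thompson metric. -/
def dThomp (A B : E →L[ℝ] E) : ℝ := Real.log (max (gThomp A B) (gThomp B A))

/-- The (unique) positive square root of a positive operator. -/
def opSqrt (A : E →L[ℝ] E) : E →L[ℝ] E :=
  letI := Classical.propDecidable
  if h : ∃ S : E →L[ℝ] E, S.IsPositive ∧ S * S = A then h.choose else 0

/-- Real power `A^t` of a strictly positive operator, `t ∈ (0,1)`, via the
Balakrishnan integral formula `A^t = (sin (π t)/π) ∫₀^∞ s^{t-1} A (A + s)⁻¹ ds`. -/
def opRpow (A : E →L[ℝ] E) (t : ℝ) : E →L[ℝ] E :=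
  (Real.sin (Real.pi * t) / Real.pi) •
    ∫ s in Set.Ioi (0 : ℝ), s ^ (t - 1) • (A * Ring.inverse (A + s • (1 : E →L[ℝ] E)))

/-- Geometric mean `A # B = A^{1/2} (A^{-1/2} B A^{-1/2})^{1/2} A^{1/2}`. -/
def geomMean (A B : E →L[ℝ] E) : E →L[ℝ] E :=
  opSqrt A * opSqrt (Ring.inverse (opSqrt A) * B * Ring.inverse (opSqrt A)) * opSqrt A

/-- `t`-weighted geometric mean `A #_t B = A^{1/2} (A^{-1/2} B A^{-1/2})^t A^{1/2}`. -/
def wGeomMean (t : ℝ) (A B : E →L[ℝ] E) : E →L[ℝ] E :=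
  opSqrt A * opRpow (Ring.inverse (opSqrt A) * B * Ring.inverse (opSqrt A)) t * opSqrt A

/-! Inversion reverses the Löwner order and congruence `X ↦ L* X L` preserves it, so
`B ↦ L ⊡_γ B` is monotone. Since `‖L‖ ≤ 1`, the operator `Id − L L*` is positive, whence
`(ρB)⁻¹ + γ(Id − L L*) ≽ ρ⁻¹ (B⁻¹ + γ(Id − L L*))` for `ρ ≥ 1`; inverting and conjugating gives
`L ⊡_γ (ρB) ≼ ρ (L ⊡_γ B)`. Thus `A ≼ ρB` implies `L ⊡_γ A ≼ ρ (L ⊡_γ B)` for every `ρ ≥ 1`, and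
on a nonzero space `max {g(A,B), g(B,A)} ≥ 1`, so both Thompson ratios of the images are bounded
by that maximum. -/

open scoped InnerProductSpace

namespace ContinuousLinearMap

instance instIsOrderedAddMonoid : IsOrderedAddMonoid (E →L[ℝ] E) where
  add_le_add_left _ _ h _ := by simpa [le_def] using h

instance instPosSMulMono : PosSMulMono ℝ (E →L[ℝ] E) where
  smul_le_smul_of_nonneg_left _ hc _ _ h := by
    simpa [le_def, ← smul_sub] using h.smul_of_nonneg hc

theorem le_iff_inner {A B : E →L[ℝ] E} :
    A ≤ B ↔ IsSelfAdjoint (B - A) ∧ ∀ x, ⟪A x, x⟫_ℝ ≤ ⟪B x, x⟫_ℝ := by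
  simp only [le_def, isPositive_iff', sub_apply, inner_sub_left, sub_nonneg]

theorem le_smul_one_of_norm_le {A : E →L[ℝ] E} (hA : IsSelfAdjoint A) {c : ℝ} (hc : ‖A‖ ≤ c) :
    A ≤ c • 1 := by
  refine le_iff_inner.2 ⟨((IsSelfAdjoint.all c).smul (.one _)).sub hA, fun x => ?_⟩
  rw [smul_apply, one_apply_eq_self, real_inner_smul_left, real_inner_self_eq_norm_sq]
  calc ⟪A x, x⟫_ℝ ≤ ‖A x‖ * ‖x‖ := real_inner_le_norm _ _
    _ ≤ c * ‖x‖ * ‖x‖ := by gcongr; exact A.le_of_opNorm_le hc x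
    _ = c * ‖x‖ ^ 2 := by ring

theorem adjoint_conj_le_adjoint_conj {A B : G →L[ℝ] G} (h : A ≤ B) (L : H →L[ℝ] G) :
    adjoint L ∘L A ∘L L ≤ adjoint L ∘L B ∘L L := by
  simpa [le_def, comp_sub, sub_comp] using h.adjoint_conj L

theorem comp_adjoint_le_one {L : H →L[ℝ] G} (hL : ‖L‖ ≤ 1) : L ∘L adjoint L ≤ 1 := by
  refine le_iff_inner.2 ⟨(IsSelfAdjoint.one _).sub (isPositive_self_comp_adjoint L).isSelfAdjoint,
    fun x => ?_⟩
  rw [comp_apply, ← adjoint_inner_right, real_inner_self_eq_norm_sq, one_apply_eq_self,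
    real_inner_self_eq_norm_sq]
  gcongr
  calc ‖adjoint L x‖ ≤ ‖adjoint L‖ * ‖x‖ := (adjoint L).le_opNorm x
    _ ≤ ‖x‖ := by rw [LinearIsometryEquiv.norm_map]; exact mul_le_of_le_one_left (norm_nonneg x) hL

theorem IsPositive.two_inner_sub_le_inner_inverse {F : Type*} [NormedAddCommGroup F]
    [InnerProductSpace ℝ F] {A : F →L[ℝ] F} (hA : A.IsPositive) (hu : IsUnit A) (x y : F) :
    2 * ⟪x, y⟫_ℝ - ⟪A y, y⟫_ℝ ≤ ⟪Ring.inverse A x, x⟫_ℝ := by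
  set v := Ring.inverse A x
  have hv : A v = x := by
    change (A * Ring.inverse A) x = x
    rw [Ring.mul_inverse_cancel A hu, one_apply_eq_self]
  have hsymm : ⟪A y, v⟫_ℝ = ⟪x, y⟫_ℝ := by
    rw [← coe_coe, hA.isSymmetric y v, coe_coe, hv, real_inner_comm]
  have := hA.inner_nonneg_left (y - v)
  simp only [map_sub, inner_sub_left, inner_sub_right, hsymm, hv] at this
  linarith [real_inner_comm x v]

end ContinuousLinearMap

theorem strictlyPos_one : StrictlyPos (1 : E →L[ℝ] E) :=
  ⟨.one _, 1, one_pos, by rw [one_smul]; exact le_refl (1 : E →L[ℝ] E)⟩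

namespace StrictlyPos

variable {A B : E →L[ℝ] E}

theorem of_le (hA : StrictlyPos A) (h : A ≤ B) : StrictlyPos B := by
  obtain ⟨hsa, α, hα, hαA : α • 1 ≤ A⟩ := hA
  exact ⟨by simpa using hsa.add (le_iff_inner.1 h).1, α, hα, hαA.trans h⟩

theorem nonneg (hA : StrictlyPos A) : 0 ≤ A := by
  obtain ⟨-, α, hα, hαA : α • 1 ≤ A⟩ := hA
  exact le_trans ((nonneg_iff_isPositive _).2 (isPositive_one.smul_of_nonneg hα.le)) hαA

theorem isPositive (hA : StrictlyPos A) : A.IsPositive :=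
  (nonneg_iff_isPositive A).1 hA.nonneg

theorem exists_pos_mul_le_inner (hA : StrictlyPos A) :
    ∃ α > 0, ∀ x, α * ‖x‖ ^ 2 ≤ ⟪A x, x⟫_ℝ := by
  obtain ⟨-, α, hα, hαA⟩ := hA
  refine ⟨α, hα, fun x => ?_⟩
  simpa [real_inner_smul_left, real_inner_self_eq_norm_sq] using (le_iff_inner.1 hαA).2 x

theorem isUnit (hA : StrictlyPos A) : IsUnit A := by
  obtain ⟨α, hα, h⟩ := hA.exists_pos_mul_le_inner
  refine isUnit_of_forall_le_norm_inner_map A (c := ⟨α, hα.le⟩) hα fun x => ?_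
  rw [mul_comm]
  exact (h x).trans (Real.le_norm_self _)

theorem smul (hA : StrictlyPos A) {c : ℝ} (hc : 0 < c) : StrictlyPos (c • A) := by
  obtain ⟨hsa, α, hα, hαA : α • 1 ≤ A⟩ := hA
  refine ⟨(IsSelfAdjoint.all c).smul hsa, c * α, by positivity, ?_⟩
  rw [mul_smul]
  exact smul_le_smul_of_nonneg_left hαA hc.le

theorem inverse_smul (hA : StrictlyPos A) {c : ℝ} (hc : 0 < c) :
    Ring.inverse (c • A) = c⁻¹ • Ring.inverse A := by
  calc Ring.inverse (c • A) = Ring.inverse (c • A) * ((c • A) * (c⁻¹ • Ring.inverse A)) := by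
        rw [smul_mul_smul_comm, mul_inv_cancel₀ hc.ne', Ring.mul_inverse_cancel A hA.isUnit,
          one_smul, mul_one]
    _ = c⁻¹ • Ring.inverse A := Ring.inverse_mul_cancel_left _ _ (hA.smul hc).isUnit

theorem inverse_le_inverse (hA : StrictlyPos A) (h : A ≤ B) :
    Ring.inverse B ≤ Ring.inverse A := by
  have hB := hA.of_le h
  refine le_iff_inner.2 ⟨hA.1.ringInverse.sub hB.1.ringInverse, fun x => ?_⟩
  set u := Ring.inverse B x
  have hu : B u = x := by
    change (B * Ring.inverse B) x = x
    rw [Ring.mul_inverse_cancel B hB.isUnit, one_apply_eq_self]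
  calc ⟪u, x⟫_ℝ = 2 * ⟪x, u⟫_ℝ - ⟪B u, u⟫_ℝ := by rw [hu, real_inner_comm]; ring
    _ ≤ 2 * ⟪x, u⟫_ℝ - ⟪A u, u⟫_ℝ := by gcongr; exact (le_iff_inner.1 h).2 u
    _ ≤ ⟪Ring.inverse A x, x⟫_ℝ :=
      hA.isPositive.two_inner_sub_le_inner_inverse hA.isUnit x u

theorem inverse (hA : StrictlyPos A) : StrictlyPos (Ring.inverse A) := by
  have hc : (0 : ℝ) < ‖A‖ + 1 := by positivity
  have hAc : A ≤ (‖A‖ + 1) • 1 := le_smul_one_of_norm_le hA.1 (le_add_of_nonneg_right zero_le_one)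
  refine ⟨hA.1.ringInverse, (‖A‖ + 1)⁻¹, inv_pos.2 hc, ?_⟩
  have h := hA.inverse_le_inverse hAc
  rwa [strictlyPos_one.inverse_smul hc, Ring.inverse_one] at h

theorem add_nonneg (hA : StrictlyPos A) (hB : 0 ≤ B) : StrictlyPos (A + B) :=
  hA.of_le (le_add_of_nonneg_right hB)

end StrictlyPos

section ResolventCocomposition

variable {L : H →L[ℝ] G} {γ : ℝ} {A B : G →L[ℝ] G}

theorem StrictlyPos.inverse_add_smul_one_sub (hL : ‖L‖ ≤ 1) (hγ : 0 ≤ γ) (hB : StrictlyPos B) :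
    StrictlyPos (Ring.inverse B + γ • (1 - L ∘L adjoint L)) :=
  hB.inverse.add_nonneg (smul_nonneg hγ (sub_nonneg.2 (comp_adjoint_le_one hL)))

theorem adjoint_conj_inverse_le_adjoint_conj_inverse {M N : G →L[ℝ] G} (hM : StrictlyPos M)
    (h : M ≤ N) (L : H →L[ℝ] G) :
    adjoint L ∘L Ring.inverse N ∘L L ≤ adjoint L ∘L Ring.inverse M ∘L L :=
  adjoint_conj_le_adjoint_conj (hM.inverse_le_inverse h) L

theorem rcc_mono (hL : ‖L‖ ≤ 1) (hγ : 0 ≤ γ) (hA : StrictlyPos A) (h : A ≤ B) :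
    rcc L γ A ≤ rcc L γ B :=
  adjoint_conj_inverse_le_adjoint_conj_inverse
    ((hA.of_le h).inverse_add_smul_one_sub hL hγ)
    (add_le_add_left (hA.inverse_le_inverse h) _) L

theorem rcc_smul_le (hL : ‖L‖ ≤ 1) (hγ : 0 ≤ γ) (hB : StrictlyPos B) {ρ : ℝ} (hρ : 1 ≤ ρ) :
    rcc L γ (ρ • B) ≤ ρ • rcc L γ B := by
  have hρ0 : 0 < ρ := zero_lt_one.trans_le hρ
  have hM := hB.inverse_add_smul_one_sub hL hγ
  have hMρ : ρ⁻¹ • (Ring.inverse B + γ • (1 - L ∘L adjoint L)) ≤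
      Ring.inverse (ρ • B) + γ • (1 - L ∘L adjoint L) := by
    rw [hB.inverse_smul hρ0, smul_add, smul_smul]
    refine add_le_add_right (smul_le_smul_of_nonneg_right (a₁ := ρ⁻¹ * γ) ?_
      (sub_nonneg.2 (comp_adjoint_le_one hL))) _
    exact mul_le_of_le_one_left hγ (inv_le_one_of_one_le₀ hρ)
  calc rcc L γ (ρ • B)
      ≤ adjoint L ∘L Ring.inverse (ρ⁻¹ • (Ring.inverse B + γ • (1 - L ∘L adjoint L))) ∘L L :=
        adjoint_conj_inverse_le_adjoint_conj_inverse (hM.smul (inv_pos.2 hρ0)) hMρ L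
    _ = ρ • rcc L γ B := by
        rw [rcc, hM.inverse_smul (inv_pos.2 hρ0), inv_inv, smul_comp, comp_smul]

end ResolventCocomposition

section Thompson

variable {F : Type*} [NormedAddCommGroup F] [InnerProductSpace ℝ F] {A B : F →L[ℝ] F}

theorem gThomp_nonneg (A B : F →L[ℝ] F) : 0 ≤ gThomp A B :=
  Real.sInf_nonneg fun _ hl => hl.1.le

theorem gThomp_le_of_forall_lt {m : ℝ} (hm : 0 ≤ m) (h : ∀ t, m < t → A ≤ t • B) :
    gThomp A B ≤ m :=
  le_of_forall_gt_imp_ge_of_dense fun t ht =>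
    csInf_le ⟨0, fun _ hl => hl.1.le⟩ ⟨hm.trans_lt ht, h t ht⟩

theorem le_smul_of_gThomp_lt [CompleteSpace F] (hA : IsSelfAdjoint A) (hB : StrictlyPos B) {t : ℝ}
    (h : gThomp A B < t) : A ≤ t • B := by
  obtain ⟨α, hα, hαB : α • 1 ≤ B⟩ := hB.2
  have hne : {l : ℝ | 0 < l ∧ Loewner A (l • B)}.Nonempty := by
    refine ⟨(‖A‖ + 1) / α, by positivity, ?_⟩
    calc A ≤ (‖A‖ + 1) • 1 := le_smul_one_of_norm_le hA (le_add_of_nonneg_right zero_le_one)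
      _ = ((‖A‖ + 1) / α) • α • 1 := by rw [smul_smul, div_mul_cancel₀ _ hα.ne']
      _ ≤ ((‖A‖ + 1) / α) • B := smul_le_smul_of_nonneg_left hαB (by positivity)
  obtain ⟨l, ⟨-, hl : A ≤ l • B⟩, hlt⟩ := exists_lt_of_csInf_lt hne h
  exact hl.trans (smul_le_smul_of_nonneg_right hlt.le hB.nonneg)

theorem StrictlyPos.not_le_smul_self [CompleteSpace F] [Nontrivial F] (hA : StrictlyPos A)
    {c : ℝ} (hc : c < 1) : ¬ A ≤ c • A := by
  intro h
  obtain ⟨x, hx⟩ := exists_ne (0 : F)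
  obtain ⟨α, hα, hαA⟩ := hA.exists_pos_mul_le_inner
  have hpos : 0 < ⟪A x, x⟫_ℝ := (hαA x).trans_lt' (by positivity)
  have hle := (le_iff_inner.1 h).2 x
  rw [smul_apply, real_inner_smul_left] at hle
  nlinarith

theorem one_le_max_gThomp [CompleteSpace F] [Nontrivial F] (hA : StrictlyPos A)
    (hB : StrictlyPos B) : 1 ≤ max (gThomp A B) (gThomp B A) := by
  by_contra! h
  obtain ⟨s, hs, hs1⟩ := exists_between h
  have hs0 : 0 ≤ s := (gThomp_nonneg A B).trans ((le_max_left _ _).trans hs.le)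
  have hAB := le_smul_of_gThomp_lt hA.1 hB ((le_max_left _ _).trans_lt hs)
  have hBA := le_smul_of_gThomp_lt hB.1 hA ((le_max_right _ _).trans_lt hs)
  refine hA.not_le_smul_self (c := s * s) (by nlinarith) ?_
  calc A ≤ s • B := hAB
    _ ≤ s • s • A := smul_le_smul_of_nonneg_left hBA hs0
    _ = (s * s) • A := smul_smul _ _ _

theorem dThomp_le_log {m : ℝ} (hm : 1 ≤ m) (hAB : gThomp A B ≤ m) (hBA : gThomp B A ≤ m) :
    dThomp A B ≤ Real.log m := by
  rcases (le_max_of_le_left (gThomp_nonneg A B) : 0 ≤ max (gThomp A B) (gThomp B A)).eq_or_lt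
    with h0 | h0
  · rw [dThomp, ← h0, Real.log_zero]
    exact Real.log_nonneg hm
  · exact Real.log_le_log h0 (max_le hAB hBA)

theorem dThomp_zero : dThomp (0 : F →L[ℝ] F) 0 = 0 := by
  have h0 : Loewner (0 : F →L[ℝ] F) 0 := le_refl (0 : F →L[ℝ] F)
  simp only [dThomp, gThomp, smul_zero, h0, and_true]
  rw [show {l : ℝ | 0 < l} = Set.Ioi 0 from rfl, csInf_Ioi, max_self, Real.log_zero]

theorem gThomp_rcc_le {L : H →L[ℝ] G} (hL : ‖L‖ ≤ 1) {γ : ℝ} (hγ : 0 ≤ γ) {A B : G →L[ℝ] G}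
    (hA : StrictlyPos A) (hB : StrictlyPos B) {m : ℝ} (hm : 1 ≤ m) (h : gThomp A B ≤ m) :
    gThomp (rcc L γ A) (rcc L γ B) ≤ m :=
  gThomp_le_of_forall_lt (zero_le_one.trans hm) fun _ ht =>
    (rcc_mono hL hγ hA (le_smul_of_gThomp_lt hA.1 hB (h.trans_lt ht))).trans
      (rcc_smul_le hL hγ hB (hm.trans ht.le))

end Thompson

theorem rcc_thompson_nonexpansive_general (L : H →L[ℝ] G)
    (hL1 : ‖L‖ ≤ 1) (γ : ℝ) (hγ : 0 < γ)
    (A B : G →L[ℝ] G) (hA : StrictlyPos A) (hB : StrictlyPos B) :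
    dThomp (rcc L γ A) (rcc L γ B) ≤ dThomp A B := by
  rcases subsingleton_or_nontrivial G with hG | hG
  · -- on the zero space all operators vanish, and `dThomp 0 0 = Real.log 0 = 0`
    simp [Subsingleton.elim L 0, Subsingleton.elim A 0, Subsingleton.elim B 0, rcc, dThomp_zero]
  · have hm := one_le_max_gThomp hA hB
    exact dThomp_le_log hm (gThomp_rcc_le hL1 hγ.le hA hB hm (le_max_left _ _))
      (gThomp_rcc_le hL1 hγ.le hB hA hm (le_max_right _ _))

theorem rcc_thompson_nonexpansive (L : H →L[ℝ] G) (hL : BoundedBelow L)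
    (hL1 : ‖L‖ ≤ 1) (γ : ℝ) (hγ : 0 < γ)
    (A B : G →L[ℝ] G) (hA : StrictlyPos A) (hB : StrictlyPos B) :
    dThomp (rcc L γ A) (rcc L γ B) ≤ dThomp A B :=
  rcc_thompson_nonexpansive_general L hL1 γ hγ A B hA hB

end
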